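/- Consider deep matrix factorization with a preconditioned gradient step of learning rate η and scalar preconditioner a with 0 < a ≤ Λ, and suppose ‖W_l(i)‖ ≤ M for all l and ‖W(i) − W*‖ ≤ B, where ℓ(W) = (1/2)‖W − W*‖_F². If η ≤ 1/(2LΛM^{L−2}B), then the product matrices before and after the step satisfy ‖W(i+1) − W(i)‖_F² ≤ ( 2η²L²Λ²M^{4L−4} + 8η⁴L⁴Λ⁴M^{6L−8}B² )·‖∇ℓ(W(i))‖_F². -/

import Mathlib

open scoped BigOperators
open Matrix

/-- Frobenius norm of a real matrix. -/
noncomputable def frobNorm {m n : Type*} [Fintype m] [Fintype n] (A : Matrix m n ℝ) : ℝ :=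
  Real.sqrt (∑ i, ∑ j, (A i j) ^ 2)

/-- Spectral norm (largest singular value) of a real matrix. -/
noncomputable def specNorm {m n : Type*} [Fintype m] [Fintype n] (A : Matrix m n ℝ) : ℝ :=
  sSup {c | ∃ x : n → ℝ, (∑ j, x j ^ 2) = 1 ∧ c = Real.sqrt (∑ i, (A.mulVec x i) ^ 2)}

/-!
Write `c = ηa`, `G = W − W*` and `ε = ηΛM^{L−2}B`. The update of factor `l` is
`c·W_{l+1:L}ᵀ G W_{1:l−1}ᵀ`, of spectral norm at most `cM^{L−1}B ≤ εM` and Frobenius norm at most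
`δ = cM^{L−1}‖G‖_F`, so every factor before and after the step has spectral norm at most
`N = M(1 + ε)`. Changing the factors of the product one at a time and using
`‖XY‖_F ≤ ‖X‖‖Y‖_F` gives `‖W(i+1) − W(i)‖_F ≤ LδN^{L−1}`; the step-size condition says
`2Lε ≤ 1`, whence `(1 + ε)^{2L−2} ≤ exp(2Lε) ≤ 2 + 4L²ε²`.
-/

namespace DMF

variable {m n p : Type*} [Fintype m] [Fintype n] [Fintype p]

section Frobenius

attribute [local instance] Matrix.frobeniusNormedAddCommGroup Matrix.frobeniusNormedSpace

theorem frobNorm_eq_frobenius_norm (A : Matrix m n ℝ) : frobNorm A = ‖A‖ := by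
  simp [frobNorm, Matrix.frobenius_norm_def, Real.sqrt_eq_rpow]

theorem frobNorm_add_le (A B : Matrix m n ℝ) : frobNorm (A + B) ≤ frobNorm A + frobNorm B := by
  simpa only [frobNorm_eq_frobenius_norm] using norm_add_le A B

theorem frobNorm_smul (c : ℝ) (A : Matrix m n ℝ) : frobNorm (c • A) = |c| * frobNorm A := by
  simp only [frobNorm_eq_frobenius_norm, norm_smul, Real.norm_eq_abs]

theorem frobNorm_transpose (A : Matrix m n ℝ) : frobNorm Aᵀ = frobNorm A := by
  simp only [frobNorm_eq_frobenius_norm, Matrix.frobenius_norm_transpose]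

end Frobenius

open scoped Matrix.Norms.L2Operator

theorem frobNorm_nonneg (A : Matrix m n ℝ) : 0 ≤ frobNorm A := Real.sqrt_nonneg _

theorem frobNorm_sq_eq_sum_norm_col (A : Matrix m n ℝ) :
    frobNorm A ^ 2 = ∑ j, ‖WithLp.toLp 2 (Aᵀ j)‖ ^ 2 := by
  simp only [frobNorm, EuclideanSpace.norm_sq_eq, Real.norm_eq_abs, sq_abs, transpose_apply]
  rw [Real.sq_sqrt (by positivity), Finset.sum_comm]

theorem l2_opNorm_le_specNorm [DecidableEq n] (A : Matrix m n ℝ) : ‖A‖ ≤ specNorm A := by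
  have hle : ∀ x : n → ℝ, ∑ j, x j ^ 2 = 1 → √(∑ i, (A *ᵥ x) i ^ 2) ≤ ‖A‖ := by
    intro x hx
    simpa [EuclideanSpace.norm_eq, hx] using Matrix.l2_opNorm_mulVec A (WithLp.toLp 2 x)
  have hbdd : BddAbove {c | ∃ x : n → ℝ, ∑ j, x j ^ 2 = 1 ∧ c = √(∑ i, (A *ᵥ x) i ^ 2)} :=
    ⟨‖A‖, by rintro c ⟨x, hx, rfl⟩; exact hle x hx⟩
  rw [Matrix.l2_opNorm_def]
  refine ContinuousLinearMap.opNorm_le_of_unit_norm (Real.sSup_nonneg ?_) fun x hx => ?_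
  · rintro c ⟨x, -, rfl⟩
    positivity
  · refine le_csSup hbdd ⟨x.ofLp, ?_, ?_⟩
    · simpa [EuclideanSpace.norm_eq] using hx
    · simp [EuclideanSpace.norm_eq]

theorem l2_opNorm_one_le [DecidableEq n] : ‖(1 : Matrix n n ℝ)‖ ≤ 1 := by
  rw [Matrix.l2_opNorm_def]
  exact ContinuousLinearMap.opNorm_le_bound _ zero_le_one fun x => by simp

theorem l2_opNorm_transpose [DecidableEq m] [DecidableEq n] (A : Matrix m n ℝ) : ‖Aᵀ‖ = ‖A‖ := by
  simpa using Matrix.l2_opNorm_conjTranspose A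

theorem frobNorm_mul_le_left [DecidableEq n] (A : Matrix m n ℝ) (B : Matrix n p ℝ) :
    frobNorm (A * B) ≤ ‖A‖ * frobNorm B := by
  refine le_of_sq_le_sq ?_ (mul_nonneg (norm_nonneg _) (frobNorm_nonneg B))
  rw [mul_pow, frobNorm_sq_eq_sum_norm_col, frobNorm_sq_eq_sum_norm_col, Finset.mul_sum]
  gcongr with j
  have hcol : (A * B)ᵀ j = A *ᵥ Bᵀ j := by
    ext i
    simp [mul_apply, mulVec, dotProduct]
  rw [hcol, ← mul_pow]
  exact pow_le_pow_left₀ (norm_nonneg _) (Matrix.l2_opNorm_mulVec A (WithLp.toLp 2 (Bᵀ j))) 2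

theorem frobNorm_mul_le_right [DecidableEq n] [DecidableEq p] (A : Matrix m n ℝ)
    (B : Matrix n p ℝ) : frobNorm (A * B) ≤ frobNorm A * ‖B‖ := by
  rw [← frobNorm_transpose, transpose_mul, ← frobNorm_transpose A, ← l2_opNorm_transpose B,
    mul_comm]
  exact frobNorm_mul_le_left _ _

theorem l2_opNorm_transpose_mul_mul_transpose_le {κ ι : Type*} [Fintype κ] [Fintype ι]
    [DecidableEq m] [DecidableEq n] [DecidableEq κ] [DecidableEq ι]
    (A : Matrix κ m ℝ) (G : Matrix κ ι ℝ) (C : Matrix n ι ℝ) :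
    ‖Aᵀ * G * Cᵀ‖ ≤ ‖A‖ * ‖C‖ * ‖G‖ := by
  calc ‖Aᵀ * G * Cᵀ‖ ≤ ‖Aᵀ‖ * ‖G‖ * ‖Cᵀ‖ :=
        (l2_opNorm_mul _ _).trans (by gcongr; exact l2_opNorm_mul _ _)
    _ = ‖A‖ * ‖C‖ * ‖G‖ := by rw [l2_opNorm_transpose, l2_opNorm_transpose]; ring

theorem frobNorm_transpose_mul_mul_transpose_le {κ ι : Type*} [Fintype κ] [Fintype ι]
    [DecidableEq m] [DecidableEq n] [DecidableEq κ] [DecidableEq ι]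
    (A : Matrix κ m ℝ) (G : Matrix κ ι ℝ) (C : Matrix n ι ℝ) :
    frobNorm (Aᵀ * G * Cᵀ) ≤ ‖A‖ * ‖C‖ * frobNorm G := by
  calc frobNorm (Aᵀ * G * Cᵀ) ≤ ‖Aᵀ‖ * frobNorm G * ‖Cᵀ‖ :=
        (frobNorm_mul_le_right _ _).trans (by gcongr; exact frobNorm_mul_le_left _ _)
    _ = ‖A‖ * ‖C‖ * frobNorm G := by rw [l2_opNorm_transpose, l2_opNorm_transpose]; ring

section PartialProducts

variable {d : ℕ → Type*} [∀ l, Fintype (d l)] [∀ l, DecidableEq (d l)]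
  {ι κ : Type*} [Fintype ι] [Fintype κ] {L : ℕ} {W W' : ∀ l, Matrix (d (l + 1)) (d l) ℝ} {M : ℝ}

theorem l2_opNorm_prefixProd_le_pow [DecidableEq ι] {Q : ∀ l, Matrix (d l) ι ℝ} (hQ0 : ‖Q 0‖ ≤ 1)
    (hQ : ∀ l < L, Q (l + 1) = W l * Q l) (hW : ∀ l < L, ‖W l‖ ≤ M) :
    ∀ l ≤ L, ‖Q l‖ ≤ M ^ l := by
  intro l
  induction l with
  | zero => simpa using hQ0
  | succ k ih =>
    intro hk
    rw [hQ k hk, pow_succ']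
    exact (l2_opNorm_mul _ _).trans <|
      mul_le_mul (hW k hk) (ih (by omega)) (norm_nonneg _) ((norm_nonneg _).trans (hW k hk))

theorem l2_opNorm_suffixProd_le_pow {P : ∀ l, Matrix ι (d l) ℝ} (hPL : ‖P L‖ ≤ 1)
    (hP : ∀ l < L, P l = P (l + 1) * W l) (hW : ∀ l < L, ‖W l‖ ≤ M) :
    ∀ l ≤ L, ‖P l‖ ≤ M ^ (L - l) := by
  suffices h : ∀ k l, l + k = L → ‖P l‖ ≤ M ^ k from fun l hl => h (L - l) l (by omega)
  intro k
  induction k with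
  | zero =>
    rintro l rfl
    simpa using hPL
  | succ k ih =>
    intro l hl
    have hlL : l < L := by omega
    rw [hP l hlL, pow_succ]
    exact (l2_opNorm_mul _ _).trans <|
      mul_le_mul (ih (l + 1) (by omega)) (hW l hlL) (norm_nonneg _)
        (pow_nonneg ((norm_nonneg _).trans (hW l hlL)) _)

theorem l2_opNorm_suffixProd_mul_prefixProd_le [DecidableEq κ] {P : ∀ l, Matrix ι (d l) ℝ}
    {Q : ∀ l, Matrix (d l) κ ℝ} (hPL : ‖P L‖ ≤ 1) (hP : ∀ l < L, P l = P (l + 1) * W l)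
    (hQ0 : ‖Q 0‖ ≤ 1) (hQ : ∀ l < L, Q (l + 1) = W l * Q l) (hW : ∀ l < L, ‖W l‖ ≤ M) :
    ∀ l < L, ‖P (l + 1)‖ * ‖Q l‖ ≤ M ^ (L - 1) := by
  intro l hl
  have hM : 0 ≤ M := (norm_nonneg _).trans (hW l hl)
  calc ‖P (l + 1)‖ * ‖Q l‖ ≤ M ^ (L - (l + 1)) * M ^ l :=
        mul_le_mul (l2_opNorm_suffixProd_le_pow hPL hP hW (l + 1) hl)
          (l2_opNorm_prefixProd_le_pow hQ0 hQ hW l hl.le) (norm_nonneg _) (pow_nonneg hM _)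
    _ = M ^ (L - 1) := by rw [← pow_add]; congr 1; omega

theorem l2_opNorm_gradStep_le [DecidableEq ι] [DecidableEq κ] {P : ∀ l, Matrix ι (d l) ℝ}
    {Q : ∀ l, Matrix (d l) κ ℝ} {G : Matrix ι κ ℝ} {c : ℝ} (hc : 0 ≤ c) (hPL : ‖P L‖ ≤ 1)
    (hP : ∀ l < L, P l = P (l + 1) * W l) (hQ0 : ‖Q 0‖ ≤ 1)
    (hQ : ∀ l < L, Q (l + 1) = W l * Q l) (hW : ∀ l < L, ‖W l‖ ≤ M)
    (hW' : ∀ l < L, W' l = W l - c • ((P (l + 1))ᵀ * G * (Q l)ᵀ)) :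
    ∀ l < L, ‖W' l‖ ≤ M + c * (M ^ (L - 1) * ‖G‖) := by
  intro l hl
  rw [hW' l hl]
  refine (norm_sub_le _ _).trans (add_le_add (hW l hl) ?_)
  rw [norm_smul, Real.norm_of_nonneg hc]
  exact mul_le_mul_of_nonneg_left ((l2_opNorm_transpose_mul_mul_transpose_le _ _ _).trans
    (mul_le_mul_of_nonneg_right
      (l2_opNorm_suffixProd_mul_prefixProd_le hPL hP hQ0 hQ hW l hl) (norm_nonneg _))) hc

theorem frobNorm_gradStep_sub_le [DecidableEq ι] [DecidableEq κ] {P : ∀ l, Matrix ι (d l) ℝ}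
    {Q : ∀ l, Matrix (d l) κ ℝ} {G : Matrix ι κ ℝ} {c : ℝ} (hc : 0 ≤ c) (hPL : ‖P L‖ ≤ 1)
    (hP : ∀ l < L, P l = P (l + 1) * W l) (hQ0 : ‖Q 0‖ ≤ 1)
    (hQ : ∀ l < L, Q (l + 1) = W l * Q l) (hW : ∀ l < L, ‖W l‖ ≤ M)
    (hW' : ∀ l < L, W' l = W l - c • ((P (l + 1))ᵀ * G * (Q l)ᵀ)) :
    ∀ l < L, frobNorm (W' l - W l) ≤ c * (M ^ (L - 1) * frobNorm G) := by
  intro l hl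
  rw [hW' l hl, sub_sub_cancel_left, ← neg_smul, frobNorm_smul, abs_neg, abs_of_nonneg hc]
  exact mul_le_mul_of_nonneg_left ((frobNorm_transpose_mul_mul_transpose_le _ _ _).trans
    (mul_le_mul_of_nonneg_right
      (l2_opNorm_suffixProd_mul_prefixProd_le hPL hP hQ0 hQ hW l hl) (frobNorm_nonneg _))) hc

theorem frobNorm_sub_prefixProd_le [DecidableEq ι] {Q Q' : ∀ l, Matrix (d l) ι ℝ} {N δ : ℝ}
    (hQ0 : ‖Q 0‖ ≤ 1) (hQ0' : Q' 0 = Q 0) (hQ : ∀ l < L, Q (l + 1) = W l * Q l)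
    (hQ' : ∀ l < L, Q' (l + 1) = W' l * Q' l) (hW : ∀ l < L, ‖W l‖ ≤ N)
    (hW' : ∀ l < L, ‖W' l‖ ≤ N) (hδ : ∀ l < L, frobNorm (W' l - W l) ≤ δ) :
    ∀ l ≤ L, frobNorm (Q' l - Q l) ≤ l * δ * N ^ (l - 1) := by
  intro l
  induction l with
  | zero => simp [hQ0', frobNorm]
  | succ k ih =>
    intro hk
    have hN : 0 ≤ N := (norm_nonneg _).trans (hW k hk)
    have hδ0 : 0 ≤ δ := (frobNorm_nonneg _).trans (hδ k hk)
    have hsplit : Q' (k + 1) - Q (k + 1) = W' k * (Q' k - Q k) + (W' k - W k) * Q k := by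
      rw [hQ k hk, hQ' k hk, Matrix.mul_sub, Matrix.sub_mul]
      abel
    calc frobNorm (Q' (k + 1) - Q (k + 1))
        ≤ ‖W' k‖ * frobNorm (Q' k - Q k) + frobNorm (W' k - W k) * ‖Q k‖ := by
          rw [hsplit]
          exact (frobNorm_add_le _ _).trans
            (add_le_add (frobNorm_mul_le_left _ _) (frobNorm_mul_le_right _ _))
      _ ≤ N * (k * δ * N ^ (k - 1)) + δ * N ^ k := by
          have hQk := l2_opNorm_prefixProd_le_pow hQ0 hQ hW k (by omega)
          exact add_le_add
            (mul_le_mul (hW' k hk) (ih (by omega)) (frobNorm_nonneg _) hN)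
            (mul_le_mul (hδ k hk) hQk (norm_nonneg _) hδ0)
      _ = (k + 1 : ℕ) * δ * N ^ (k + 1 - 1) := by
          rcases k with _ | k
          · simp
          · simp only [Nat.add_sub_cancel]
            push_cast
            ring

end PartialProducts

theorem one_add_pow_le_two_add_sq {ε : ℝ} {k : ℕ} (hε : 0 ≤ ε) (hkε : k * ε ≤ 1) :
    (1 + ε) ^ k ≤ 2 + (k * ε) ^ 2 := by
  have hexp : Real.exp (k * ε) ≤ 1 + k * ε + (k * ε) ^ 2 := by
    have := Real.abs_exp_sub_one_sub_id_le (x := k * ε) (by rw [abs_le]; constructor <;> nlinarith)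
    linarith [(abs_le.mp this).2]
  calc (1 + ε) ^ k ≤ Real.exp ε ^ k := by
        gcongr
        linarith [Real.add_one_le_exp ε]
    _ = Real.exp (k * ε) := (Real.exp_nat_mul ε k).symm
    _ ≤ 2 + (k * ε) ^ 2 := by linarith

theorem sq_perturbation_bound_le {L : ℕ} (hL : 2 ≤ L) {c η Λ M B g : ℝ} (hc : 0 ≤ c)
    (hcη : c ≤ η * Λ) (hM : 0 ≤ M) (hε : 0 ≤ η * Λ * M ^ (L - 2) * B)
    (hLε : 2 * L * (η * Λ * M ^ (L - 2) * B) ≤ 1) :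
    (L * (c * (M ^ (L - 1) * g)) * (M * (1 + η * Λ * M ^ (L - 2) * B)) ^ (L - 1)) ^ 2
      ≤ (2 * η ^ 2 * (L : ℝ) ^ 2 * Λ ^ 2 * M ^ (4 * L - 4)
          + 8 * η ^ 4 * (L : ℝ) ^ 4 * Λ ^ 4 * M ^ (6 * L - 8) * B ^ 2) * g ^ 2 := by
  obtain ⟨k, rfl⟩ : ∃ k, L = k + 2 := ⟨L - 2, by omega⟩
  simp only [show k + 2 - 2 = k by omega, show k + 2 - 1 = k + 1 by omega,
    show 4 * (k + 2) - 4 = 4 * k + 4 by omega, show 6 * (k + 2) - 8 = 6 * k + 4 by omega] at *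
  set ε := η * Λ * M ^ k * B
  have hpow : (1 + ε) ^ (2 * (k + 1)) ≤ 2 + (2 * (k + 2 : ℕ) * ε) ^ 2 := by
    calc (1 + ε) ^ (2 * (k + 1)) ≤ 2 + ((2 * (k + 1) : ℕ) * ε) ^ 2 :=
          one_add_pow_le_two_add_sq hε (by push_cast at hLε ⊢; nlinarith)
      _ ≤ 2 + (2 * (k + 2 : ℕ) * ε) ^ 2 := by gcongr; push_cast; linarith
  calc _ = (k + 2 : ℕ) ^ 2 * c ^ 2 * M ^ (4 * k + 4) * (1 + ε) ^ (2 * (k + 1)) * g ^ 2 := by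
        rw [mul_pow M (1 + ε)]
        ring
    _ ≤ (k + 2 : ℕ) ^ 2 * (η * Λ) ^ 2 * M ^ (4 * k + 4) * (2 + (2 * (k + 2 : ℕ) * ε) ^ 2)
          * g ^ 2 := by
        gcongr
    _ ≤ _ := by
        have : 0 ≤ η ^ 4 * ((k + 2 : ℕ) : ℝ) ^ 4 * Λ ^ 4 * M ^ (6 * k + 4) * B ^ 2 * g ^ 2 := by
          positivity
        simp only [ε]
        linear_combination 4 * this

end DMF

open DMF Matrix.Norms.L2Operator

/-- `W l` and `W' l` (`l < L`) are the paper's `W_{l+1}` before and after the step,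
`Q l = W_l ⋯ W_1` and `P l = W_L ⋯ W_{l+1}` are the partial products, and `Q L − W*` is the
gradient of the loss. -/
theorem stmt5 (L : ℕ) (hL : 2 ≤ L) (n : ℕ → ℕ)
    (W W' : ∀ l : ℕ, Matrix (Fin (n (l + 1))) (Fin (n l)) ℝ)
    (Wstar : Matrix (Fin (n L)) (Fin (n 0)) ℝ)
    (Q Q' : ∀ l : ℕ, Matrix (Fin (n l)) (Fin (n 0)) ℝ)
    (P : ∀ l : ℕ, Matrix (Fin (n L)) (Fin (n l)) ℝ)
    (hQ0 : Q 0 = 1) (hQs : ∀ l < L, Q (l + 1) = W l * Q l)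
    (hQ0' : Q' 0 = 1) (hQs' : ∀ l < L, Q' (l + 1) = W' l * Q' l)
    (hPL : P L = 1) (hPs : ∀ l < L, P l = P (l + 1) * W l)
    (η a Λ M B : ℝ) (hη0 : 0 < η) (ha : 0 < a) (haΛ : a ≤ Λ)
    (hupd : ∀ l < L, W' l = W l - (η * a) • ((P (l + 1))ᵀ * (Q L - Wstar) * (Q l)ᵀ))
    (hM : ∀ l < L, specNorm (W l) ≤ M)
    (hB : specNorm (Q L - Wstar) ≤ B)
    (hηs : η ≤ 1 / (2 * (L : ℝ) * Λ * M ^ (L - 2) * B)) :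
    frobNorm (Q' L - Q L) ^ 2
      ≤ (2 * η ^ 2 * (L : ℝ) ^ 2 * Λ ^ 2 * M ^ (4 * L - 4)
          + 8 * η ^ 4 * (L : ℝ) ^ 4 * Λ ^ 4 * M ^ (6 * L - 8) * B ^ 2)
        * frobNorm (Q L - Wstar) ^ 2 := by
  set ε := η * Λ * M ^ (L - 2) * B
  have hWM : ∀ l < L, ‖W l‖ ≤ M := fun l hl => (l2_opNorm_le_specNorm _).trans (hM l hl)
  have hM0 : 0 ≤ M := (norm_nonneg _).trans (hWM 0 (by omega))
  have hGB : ‖Q L - Wstar‖ ≤ B := (l2_opNorm_le_specNorm _).trans hB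
  have hΛ : 0 < Λ := ha.trans_le haΛ
  have hε0 : 0 ≤ ε := by
    have := (norm_nonneg _).trans hGB
    positivity
  have hLε : 2 * L * ε ≤ 1 := by
    linarith [(le_div_iff₀ (one_div_pos.mp (hη0.trans_le hηs))).mp hηs]
  have hc : η * a ≤ η * Λ := mul_le_mul_of_nonneg_left haΛ hη0.le
  have hQ1 : ‖Q 0‖ ≤ 1 := hQ0 ▸ l2_opNorm_one_le
  have hP1 : ‖P L‖ ≤ 1 := hPL ▸ l2_opNorm_one_le
  have hW' : ∀ l < L, ‖W' l‖ ≤ M * (1 + ε) := fun l hl => calc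
    ‖W' l‖ ≤ M + η * a * (M ^ (L - 1) * ‖Q L - Wstar‖) :=
      l2_opNorm_gradStep_le (mul_pos hη0 ha).le hP1 hPs hQ1 hQs hWM hupd l hl
    _ ≤ M + η * Λ * (M ^ (L - 2) * M * B) := by
      rw [← pow_succ, show L - 2 + 1 = L - 1 by omega]
      gcongr
    _ = M * (1 + ε) := by ring
  have hprod := frobNorm_sub_prefixProd_le (d := fun l => Fin (n l)) hQ1
    (hQ0'.trans hQ0.symm) hQs hQs'
    (fun l hl => (hWM l hl).trans (le_mul_of_one_le_right hM0 (by linarith))) hW'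
    (frobNorm_gradStep_sub_le (mul_pos hη0 ha).le hP1 hPs hQ1 hQs hWM hupd) L le_rfl
  exact (pow_le_pow_left₀ (frobNorm_nonneg _) hprod 2).trans
    (sq_perturbation_bound_le hL (mul_pos hη0 ha).le hc hM0 hε0 hLε)
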